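/- arXiv:2003.04384 — 3 statements merged into one kernel-verified Lean document; each statement's English description precedes it below -/
import Mathlib

section
/- Let m ∈ ℓ∞(G)* and let x be a character of G with m(x) ≠ 0. Then Ann_L(m) + ℂ·ε = Inv_L(m,x); that is, f ∈ ℓ¹(G) satisfies f*m = f(x)·m if and only if f = g + c·ε for some g ∈ ℓ¹(G) with g*m = 0 and some c ∈ ℂ. -/
set_option linter.unusedSectionVars false

open scoped ENNReal ComplexOrder

noncomputable section

namespace QG

variable {G : Type*} [Group G]

/-- `ℓ∞(G)`: bounded complex functions on `G`. -/
abbrev Linf (G : Type*) : Type _ := lp (fun _ : G => ℂ) ∞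

/-- `ℓ¹(G)`: summable complex functions on `G`. -/
abbrev L1 (G : Type*) : Type _ := lp (fun _ : G => ℂ) 1

/-- The dual space `ℓ∞(G)*`. -/
abbrev DualLinf (G : Type*) : Type _ := StrongDual ℂ (Linf G)

lemma summable_norm (f : L1 G) : Summable fun s => ‖f s‖ := by
  have h := (lp.memℓp f).summable (by simp)
  simpa using h

lemma norm_apply_le (x : Linf G) (s : G) : ‖x s‖ ≤ ‖x‖ :=
  lp.norm_apply_le_norm ENNReal.top_ne_zero x s

/-- The constant function `1` in `ℓ∞(G)`. -/
def one' : Linf G :=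
  ⟨fun _ => (1 : ℂ), memℓp_infty ⟨1, by rintro r ⟨t, rfl⟩; simp⟩⟩

/-- Left translation: `(L_s x)(t) = x (s * t)`. -/
def Ltrans (s : G) (x : Linf G) : Linf G :=
  ⟨fun t => x (s * t),
    memℓp_infty (BddAbove.mono (by rintro r ⟨t, rfl⟩; exact ⟨s * t, rfl⟩) (lp.memℓp x).bddAbove)⟩

@[simp] lemma Ltrans_apply (s : G) (x : Linf G) (t : G) : Ltrans s x t = x (s * t) := rfl

lemma norm_Ltrans_le (s : G) (x : Linf G) : ‖Ltrans s x‖ ≤ ‖x‖ := by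
  rw [lp.norm_eq_ciSup]
  exact ciSup_le fun t => norm_apply_le x (s * t)

/-- The action `m * x` of `m ∈ ℓ∞(G)*` on `x ∈ ℓ∞(G)`: `(m*x)(s) = m (L_s x)`. -/
def starAct (m : DualLinf G) (x : Linf G) : Linf G :=
  ⟨fun s => m (Ltrans s x),
    memℓp_infty ⟨‖m‖ * ‖x‖, by
      rintro r ⟨s, rfl⟩
      calc ‖m (Ltrans s x)‖ ≤ ‖m‖ * ‖Ltrans s x‖ := m.le_opNorm _
        _ ≤ ‖m‖ * ‖x‖ :=
          mul_le_mul_of_nonneg_left (norm_Ltrans_le s x) (norm_nonneg m)⟩⟩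

@[simp] lemma starAct_apply (m : DualLinf G) (x : Linf G) (s : G) :
    starAct m x s = m (Ltrans s x) := rfl

lemma summable_mul_bound (f : L1 G) (x : Linf G) (t : G) :
    Summable fun s => ‖f s * x (s * t)‖ := by
  refine Summable.of_nonneg_of_le (fun s => norm_nonneg _) (fun s => ?_)
    ((summable_norm f).mul_right ‖x‖)
  rw [norm_mul]
  exact mul_le_mul_of_nonneg_left (norm_apply_le x (s * t)) (norm_nonneg _)

/-- The right action of `ℓ¹(G)` on `ℓ∞(G)`: `(x * f)(t) = ∑_s f s * x (s * t)`. -/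
def rAct (x : Linf G) (f : L1 G) : Linf G :=
  ⟨fun t => ∑' s, f s * x (s * t),
    memℓp_infty ⟨(∑' s, ‖f s‖) * ‖x‖, by
      rintro r ⟨t, rfl⟩
      calc ‖∑' s, f s * x (s * t)‖ ≤ ∑' s, ‖f s * x (s * t)‖ :=
            norm_tsum_le_tsum_norm (summable_mul_bound f x t)
        _ ≤ ∑' s, ‖f s‖ * ‖x‖ :=
            Summable.tsum_le_tsum (fun s => by
                rw [norm_mul]
                exact mul_le_mul_of_nonneg_left (norm_apply_le x (s * t)) (norm_nonneg _))
              (summable_mul_bound f x t) ((summable_norm f).mul_right _)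
        _ = (∑' s, ‖f s‖) * ‖x‖ := tsum_mul_right⟩⟩

@[simp] lemma rAct_apply (x : Linf G) (f : L1 G) (t : G) :
    rAct x f t = ∑' s, f s * x (s * t) := rfl

/-- The shear equivalence of `G × G`. -/
def shearEquiv (G : Type*) [Group G] : G × G ≃ G × G where
  toFun p := (p.2, p.2⁻¹ * p.1)
  invFun p := (p.1 * p.2, p.1)
  left_inv p := by simp
  right_inv p := by simp

lemma conv_prod_summable (f g : L1 G) :
    Summable fun p : G × G => ‖f p.2‖ * ‖g (p.2⁻¹ * p.1)‖ := by
  have h0 : Summable fun p : G × G => ‖f p.1‖ * ‖g p.2‖ :=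
    (summable_norm f).mul_of_nonneg (summable_norm g) (fun _ => norm_nonneg _)
      (fun _ => norm_nonneg _)
  have key : Summable ((fun p : G × G => ‖f p.1‖ * ‖g p.2‖) ∘ (shearEquiv G)) :=
    (shearEquiv G).summable_iff.mpr h0
  have heq : ((fun p : G × G => ‖f p.1‖ * ‖g p.2‖) ∘ (shearEquiv G)) =
      fun p : G × G => ‖f p.2‖ * ‖g (p.2⁻¹ * p.1)‖ := by
    funext p
    simp [shearEquiv, Function.comp]
  rwa [heq] at key

lemma conv_memℓp (f g : L1 G) : Memℓp (fun t : G => ∑' s, f s * g (s⁻¹ * t)) 1 := by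
  have hp := conv_prod_summable f g
  obtain ⟨h1, h2⟩ :=
    (summable_prod_of_nonneg (fun p => mul_nonneg (norm_nonneg _) (norm_nonneg _))).1 hp
  apply memℓp_gen
  simp only [ENNReal.toReal_one, Real.rpow_one]
  refine Summable.of_nonneg_of_le (fun t => norm_nonneg _) (fun t => ?_) h2
  calc ‖∑' s, f s * g (s⁻¹ * t)‖ ≤ ∑' s, ‖f s * g (s⁻¹ * t)‖ :=
        norm_tsum_le_tsum_norm (by simpa only [norm_mul] using h1 t)
    _ = ∑' s, ‖f s‖ * ‖g (s⁻¹ * t)‖ := tsum_congr fun s => norm_mul _ _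

/-- Convolution on `ℓ¹(G)`: `(f * g)(t) = ∑_s f s * g (s⁻¹ t)`. -/
def conv (f g : L1 G) : L1 G :=
  ⟨fun t => ∑' s, f s * g (s⁻¹ * t), conv_memℓp f g⟩

@[simp] lemma conv_apply (f g : L1 G) (t : G) : conv f g t = ∑' s, f s * g (s⁻¹ * t) := rfl

open Classical in
/-- The unit `ε = δ_e` of the convolution algebra `ℓ¹(G)`. -/
def eps : L1 G :=
  ⟨fun t => if t = 1 then 1 else 0, by
    apply memℓp_gen
    refine summable_of_ne_finset_zero (s := ({1} : Finset G)) ?_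
    intro t ht
    simp only [Finset.mem_singleton] at ht
    simp [ht]⟩

open Classical in
/-- Multiplication by the indicator function of `H`: `f · 1_H`. -/
def mulIndic (H : Subgroup G) (f : L1 G) : L1 G :=
  ⟨fun s => if s ∈ H then f s else 0, by
    apply memℓp_gen
    simp only [ENNReal.toReal_one, Real.rpow_one]
    refine Summable.of_nonneg_of_le (fun s => norm_nonneg _) (fun s => ?_) (summable_norm f)
    by_cases h : s ∈ H <;> simp [h]⟩

open Classical in
/-- The indicator function `1_H ∈ ℓ∞(G)` of a subgroup `H`. -/
def indic (H : Subgroup G) : Linf G :=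
  ⟨fun s => if s ∈ H then 1 else 0,
    memℓp_infty ⟨1, by rintro r ⟨s, rfl⟩; by_cases h : s ∈ H <;> simp [h]⟩⟩

/-- A state on `ℓ∞(G)`: unital positive functional. -/
def IsState (m : DualLinf G) : Prop :=
  m one' = 1 ∧ ∀ x : Linf G, (∀ s, 0 ≤ x s) → 0 ≤ m x

/-- `f ∈ Ann_L(m)`, i.e. `f * m = 0`. -/
def memAnnL (m : DualLinf G) (f : L1 G) : Prop :=
  ∀ x : Linf G, ∑' s, f s * m (Ltrans s x) = 0

/-- `f ∈ Inv_L(m, x₀)`, i.e. `f * m = f(x₀) · m`. -/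
def memInvLx (m : DualLinf G) (x₀ : Linf G) (f : L1 G) : Prop :=
  ∀ x : Linf G, ∑' s, f s * m (Ltrans s x) = (∑' s, f s * x₀ s) * m x

/-- `f ∈ Inv_L(m)`, i.e. `f * m = f(1) · m`. -/
def memInvL (m : DualLinf G) (f : L1 G) : Prop :=
  ∀ x : Linf G, ∑' s, f s * m (Ltrans s x) = (∑' s, f s) * m x

/-- A right idempotent state: a state with `m (m * x) = m x` for all `x`. -/
def IsRightIdempotentState (m : DualLinf G) : Prop :=
  IsState m ∧ ∀ x : Linf G, m (starAct m x) = m x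

/-- A character of `G` in `ℓ∞(G)`. -/
def IsCharacter (x : Linf G) : Prop :=
  (∀ s t : G, x (s * t) = x s * x t) ∧ ∀ s : G, ‖x s‖ = 1

/-- `ℓ∞(G/H)`, the right-`H`-invariant elements of `ℓ∞(G)`. -/
def LinfQuot (H : Subgroup G) : Set (Linf G) :=
  {x | ∀ s : G, ∀ h ∈ H, x (s * h) = x s}

/-- `J¹(G,H)`, the preannihilator of `ℓ∞(G/H)` in `ℓ¹(G)`. -/
def J1 (H : Subgroup G) : Set (L1 G) :=
  {f | ∀ x ∈ LinfQuot H, ∑' s, f s * x s = 0}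

/-- `E` witnesses relative amenability of `ℓ∞(G/H)`: a unital positive
`ℓ¹(G)`-module map `ℓ∞(G) → ℓ∞(G)` with range inside `ℓ∞(G/H)`. -/
def IsRelAmenMap (H : Subgroup G) (E : Linf G →ₗ[ℂ] Linf G) : Prop :=
  E one' = one' ∧
  (∀ x : Linf G, (∀ s, 0 ≤ x s) → ∀ s, 0 ≤ E x s) ∧
  (∀ x : Linf G, E x ∈ LinfQuot H) ∧
  (∀ (x : Linf G) (f : L1 G), E (rAct x f) = rAct (E x) f)

/-- `ℓ∞(G/H)` is relatively amenable. -/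
def RelAmen (H : Subgroup G) : Prop :=
  ∃ E : Linf G →ₗ[ℂ] Linf G, IsRelAmenMap H E

/-- `ℓ∞(G/H)` is amenable. -/
def Amen (H : Subgroup G) : Prop :=
  ∃ E : Linf G →ₗ[ℂ] Linf G, IsRelAmenMap H E ∧ ∀ x ∈ LinfQuot H, E x = x

/-- Amenability of a discrete group: existence of a left invariant mean. -/
def GroupAmenable (K : Type*) [Group K] : Prop :=
  ∃ μ : DualLinf K, IsState μ ∧ ∀ (k : K) (y : Linf K), μ (Ltrans k y) = μ y

/-- `H`-invariance of a functional on `ℓ∞(G)`. -/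
def HInvariant (H : Subgroup G) (μ : DualLinf G) : Prop :=
  ∀ h ∈ H, ∀ x : Linf G, μ (Ltrans h x) = μ x

/-- `J` has a bounded right approximate identity contained in `S`. -/
def HasBraiIn (J S : Set (L1 G)) : Prop :=
  ∃ (ι : Type) (l : Filter ι) (e : ι → L1 G), l.NeBot ∧
    (∃ C : ℝ, ∀ i, ‖e i‖ ≤ C) ∧ (∀ i, e i ∈ S) ∧
    ∀ f ∈ J, Filter.Tendsto (fun i => ‖conv f (e i) - f‖) l (nhds 0)

lemma one'_mem_LinfQuot (H : Subgroup G) : (one' : Linf G) ∈ LinfQuot H :=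
  fun _ _ _ => rfl

lemma Ltrans_mem_LinfQuot {H : Subgroup G} {x : Linf G} (hx : x ∈ LinfQuot H) (s : G) :
    Ltrans s x ∈ LinfQuot H := by
  intro t h hh
  show x (s * (t * h)) = x (s * t)
  rw [← mul_assoc]
  exact hx (s * t) h hh

/-- `ℓ∞(G/H)` as a subspace of `ℓ∞(G)`. -/
def LinfQuotSub (H : Subgroup G) : Submodule ℂ (Linf G) where
  carrier := LinfQuot H
  add_mem' := by
    intro a b ha hb s h hh
    show (a + b : Linf G) (s * h) = (a + b : Linf G) s
    rw [lp.coeFn_add]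
    simp only [Pi.add_apply]
    rw [ha s h hh, hb s h hh]
  zero_mem' := by
    intro s h hh
    show (0 : Linf G) (s * h) = (0 : Linf G) s
    rw [lp.coeFn_zero]
    simp
  smul_mem' := by
    intro c a ha s h hh
    show (c • a : Linf G) (s * h) = (c • a : Linf G) s
    rw [lp.coeFn_smul]
    simp only [Pi.smul_apply]
    rw [ha s h hh]

/-- The weak* topology on `ℓ∞(G) = ℓ¹(G)*`: the topology induced by the
pairings against elements of `ℓ¹(G)`. -/
def weakStarTop (G : Type*) [Group G] : TopologicalSpace (Linf G) :=
  TopologicalSpace.induced (fun (y : Linf G) => fun f : L1 G => ∑' s, f s * y s)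
    Pi.topologicalSpace

/-! `ε` acts as the identity and `ε(x) = 1`, so `f - f(x)·ε ∈ Ann_L(m)` whenever
`f ∈ Inv_L(m,x)`. Conversely, for a character `x` one has `m * x = m(x)·x`, so `g ∈ Ann_L(m)`
gives `m(x)·g(x) = (g * m)(x) = 0`, hence `g(x) = 0` and `g + c·ε ∈ Inv_L(m,x)`. -/

section Pairing

variable {α : Type*}

lemma summable_mul_linf (f : L1 α) (φ : Linf α) : Summable fun s => f s * φ s := by
  have hf : Summable fun s => ‖f s‖ := by simpa using (lp.memℓp f).summable (by simp)
  refine Summable.of_norm_bounded (hf.mul_right ‖φ‖) fun s => ?_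
  rw [norm_mul]
  exact mul_le_mul_of_nonneg_left (lp.norm_apply_le_norm ENNReal.top_ne_zero φ s)
    (norm_nonneg _)

def pairing (φ : Linf α) : L1 α →ₗ[ℂ] ℂ where
  toFun f := ∑' s, f s * φ s
  map_add' f g := by
    simp only [lp.coeFn_add, Pi.add_apply, add_mul]
    exact (summable_mul_linf f φ).tsum_add (summable_mul_linf g φ)
  map_smul' c f := by
    simp only [lp.coeFn_smul, Pi.smul_apply, smul_eq_mul, mul_assoc, RingHom.id_apply]
    exact tsum_mul_left

lemma pairing_apply (φ : Linf α) (f : L1 α) : pairing φ f = ∑' s, f s * φ s := rfl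

lemma pairing_smul_left (c : ℂ) (φ : Linf α) (f : L1 α) :
    pairing (c • φ) f = c * pairing φ f := by
  simp only [pairing_apply, lp.coeFn_smul, Pi.smul_apply, smul_eq_mul, mul_left_comm _ c]
  exact tsum_mul_left

end Pairing

variable {m : DualLinf G} {x : Linf G}

lemma memAnnL_iff_pairing {g : L1 G} :
    memAnnL m g ↔ ∀ y, pairing (starAct m y) g = 0 := Iff.rfl

lemma memInvLx_iff_pairing {f : L1 G} :
    memInvLx m x f ↔ ∀ y, pairing (starAct m y) f = pairing x f * m y := Iff.rfl

lemma pairing_eps (φ : Linf G) : pairing φ eps = φ 1 := by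
  classical
  rw [pairing_apply, tsum_eq_single 1 fun s hs => by simp [eps, hs]]
  simp [eps]

lemma starAct_apply_one (m : DualLinf G) (y : Linf G) : starAct m y 1 = m y := by
  rw [starAct_apply]
  congr 1
  ext t
  simp

lemma IsCharacter.apply_one (hx : IsCharacter x) : x 1 = 1 := by
  have hne : x 1 ≠ 0 := fun h => by simpa [h] using hx.2 1
  exact mul_left_cancel₀ hne (by rw [← hx.1, mul_one, mul_one])

lemma IsCharacter.starAct_eq (hx : IsCharacter x) (m : DualLinf G) : starAct m x = m x • x := by
  ext s
  have hLs : Ltrans s x = x s • x := by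
    ext t
    simp [hx.1 s t]
  simp [hLs, mul_comm]

lemma memAnnL_sub_smul_eps {f : L1 G} (hf : memInvLx m x f) :
    memAnnL m (f - pairing x f • eps) := by
  rw [memInvLx_iff_pairing] at hf
  rw [memAnnL_iff_pairing]
  intro y
  rw [map_sub, map_smul, pairing_eps, starAct_apply_one, hf y, smul_eq_mul, sub_self]

lemma IsCharacter.pairing_eq_zero_of_memAnnL (hx : IsCharacter x) (hmx : m x ≠ 0) {g : L1 G}
    (hg : memAnnL m g) : pairing x g = 0 := by
  have h := memAnnL_iff_pairing.1 hg x
  rw [hx.starAct_eq, pairing_smul_left] at h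
  exact (mul_eq_zero.1 h).resolve_left hmx

lemma memInvLx_add_smul_eps (hx1 : x 1 = 1) {g : L1 G} (hg : memAnnL m g)
    (hgx : pairing x g = 0) (c : ℂ) : memInvLx m x (g + c • eps) := by
  rw [memAnnL_iff_pairing] at hg
  rw [memInvLx_iff_pairing]
  intro y
  simp only [map_add, map_smul, pairing_eps, starAct_apply_one, hx1, hgx, hg y, smul_eq_mul]
  ring

/-- `Ann_L(m) + ℂ·ε = Inv_L(m,x)` for a character `x` with `m(x) ≠ 0`. -/
theorem statement1 (m : DualLinf G) (x : Linf G) (hx : IsCharacter x) (hmx : m x ≠ 0)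
    (f : L1 G) :
    memInvLx m x f ↔ ∃ (g : L1 G) (c : ℂ), memAnnL m g ∧ f = g + c • eps := by
  constructor
  · intro hf
    exact ⟨f - pairing x f • eps, pairing x f, memAnnL_sub_smul_eps hf, by abel⟩
  · rintro ⟨g, c, hg, rfl⟩
    exact memInvLx_add_smul_eps hx.apply_one hg (hx.pairing_eq_zero_of_memAnnL hmx hg) c

end QG
end
end

section
/- Let x be a character of G and let m, m' ∈ ℓ∞(G)* satisfy m(x) ≠ 0 and m'(x) ≠ 0. Then Inv_L(m,x) = Inv_L(m',x) if and only if Ann_L(m) = Ann_L(m'). -/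
/-!
For a character `x` we have `L_s x = x(s) • x`, so `(f * m)(x) = f(x) m(x)`. When `m(x) ≠ 0` this
forces `f(x) = 0` for `f ∈ Ann_L(m)`, and on such `f` membership in `Ann_L(m)` and in `Inv_L(m,x)`
coincide. Conversely, for any `x` and `m`, `f ∈ Inv_L(m,x)` iff `f - f(x) ε ∈ Ann_L(m)`.
-/

set_option linter.unusedSectionVars false

open scoped ENNReal ComplexOrder

noncomputable section

namespace QG

variable {G : Type*} [Group G]

lemma Ltrans_one (y : Linf G) : Ltrans (1 : G) y = y :=
  lp.ext <| funext fun t => by simp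

lemma Ltrans_of_isCharacter {x : Linf G} (hx : IsCharacter x) (s : G) :
    Ltrans s x = x s • x :=
  lp.ext <| funext fun t => by simp [hx.1 s t]

lemma summable_mul_apply_Ltrans (f : L1 G) (m : DualLinf G) (y : Linf G) :
    Summable fun s => f s * m (Ltrans s y) := by
  refine Summable.of_norm_bounded ((summable_norm f).mul_right (‖m‖ * ‖y‖)) fun s => ?_
  rw [norm_mul]
  gcongr
  exact m.le_opNorm_of_le (norm_Ltrans_le s y)

lemma tsum_mul_apply_Ltrans_of_isCharacter {x : Linf G} (hx : IsCharacter x)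
    (m : DualLinf G) (f : L1 G) :
    ∑' s, f s * m (Ltrans s x) = (∑' s, f s * x s) * m x := by
  rw [← tsum_mul_right]
  refine tsum_congr fun s => ?_
  rw [Ltrans_of_isCharacter hx, map_smul, smul_eq_mul, mul_assoc]

lemma tsum_smul_eps_mul_apply_Ltrans (m : DualLinf G) (c : ℂ) (y : Linf G) :
    ∑' s, (c • eps : L1 G) s * m (Ltrans s y) = c * m y := by
  classical
  rw [tsum_eq_single 1 fun s hs => by simp [eps, hs]]
  simp [eps, Ltrans_one]

lemma tsum_sub_smul_eps_mul_apply_Ltrans (m : DualLinf G) (f : L1 G) (c : ℂ) (y : Linf G) :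
    ∑' s, (f - c • eps : L1 G) s * m (Ltrans s y)
      = ∑' s, f s * m (Ltrans s y) - c * m y := by
  simp only [lp.coeFn_sub, Pi.sub_apply, sub_mul]
  rw [(summable_mul_apply_Ltrans f m y).tsum_sub (summable_mul_apply_Ltrans _ m y),
    tsum_smul_eps_mul_apply_Ltrans]

lemma memAnnL_sub_smul_eps_iff_memInvLx (m : DualLinf G) (x₀ : Linf G) (f : L1 G) :
    memAnnL m (f - (∑' s, f s * x₀ s) • eps) ↔ memInvLx m x₀ f := by
  simp only [memAnnL, memInvLx, tsum_sub_smul_eps_mul_apply_Ltrans, sub_eq_zero]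

lemma memInvLx_iff_memAnnL_of_tsum_eq_zero {m : DualLinf G} {x₀ : Linf G} {f : L1 G}
    (hf : ∑' s, f s * x₀ s = 0) : memInvLx m x₀ f ↔ memAnnL m f := by
  simp only [memInvLx, memAnnL, hf, zero_mul]

lemma tsum_mul_eq_zero_of_memAnnL {x : Linf G} (hx : IsCharacter x) {m : DualLinf G}
    (hm : m x ≠ 0) {f : L1 G} (hf : memAnnL m f) : ∑' s, f s * x s = 0 := by
  have h := hf x
  rw [tsum_mul_apply_Ltrans_of_isCharacter hx] at h
  exact (mul_eq_zero.1 h).resolve_right hm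

lemma setOf_memAnnL_subset_of_memInvLx {x : Linf G} (hx : IsCharacter x) {m m' : DualLinf G}
    (hm : m x ≠ 0) (h : {f : L1 G | memInvLx m x f} ⊆ {f : L1 G | memInvLx m' x f}) :
    {f : L1 G | memAnnL m f} ⊆ {f : L1 G | memAnnL m' f} := fun f hf => by
  have hf0 := tsum_mul_eq_zero_of_memAnnL hx hm hf
  rw [Set.mem_ofPred_eq, ← memInvLx_iff_memAnnL_of_tsum_eq_zero hf0] at hf ⊢
  exact h hf

lemma setOf_memInvLx_subset_of_memAnnL {x₀ : Linf G} {m m' : DualLinf G}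
    (h : {f : L1 G | memAnnL m f} ⊆ {f : L1 G | memAnnL m' f}) :
    {f : L1 G | memInvLx m x₀ f} ⊆ {f : L1 G | memInvLx m' x₀ f} := fun f hf => by
  rw [Set.mem_ofPred_eq, ← memAnnL_sub_smul_eps_iff_memInvLx] at hf ⊢
  exact h hf

/-- for a character `x` and `m, m'` non-vanishing at `x`,
`Inv_L(m,x) = Inv_L(m',x)` iff `Ann_L(m) = Ann_L(m')`. -/
theorem statement2 (x : Linf G) (hx : IsCharacter x) (m m' : DualLinf G)
    (hm : m x ≠ 0) (hm' : m' x ≠ 0) :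
    {f : L1 G | memInvLx m x f} = {f : L1 G | memInvLx m' x f} ↔
      {f : L1 G | memAnnL m f} = {f : L1 G | memAnnL m' f} :=
  ⟨fun h => (setOf_memAnnL_subset_of_memInvLx hx hm h.subset).antisymm
      (setOf_memAnnL_subset_of_memInvLx hx hm' h.superset),
    fun h => (setOf_memInvLx_subset_of_memAnnL h.subset).antisymm
      (setOf_memInvLx_subset_of_memAnnL h.superset)⟩

end QG
end
end

section
/- Let H be a subgroup of G. Then ℓ∞(G/H) is amenable if and only if there exists a state m on ℓ∞(G) with m(1_H) ≠ 0 such that (f·1_H)*m = f(1_H)·m for every f ∈ ℓ¹(G). -/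
set_option linter.unusedSectionVars false

open scoped ENNReal ComplexOrder

noncomputable section

namespace QG

variable {G : Type*} [Group G]

/-! If `E` witnesses amenability, `m x = (E x)(e)` is a state. Being an `ℓ¹(G)`-module map, `E`
commutes with left translations (test it on point masses), so `E x = m * x`; right `H`-invariance
of `E x` then makes `m` invariant under left translation by `H`, which is the displayed identity.
Conversely, for such an `m` put `μ x = m(1_H x) / m(1_H)` and `E x = μ * x`. Since
`x * f = ∑ f(s) L_s x` converges in norm, `E` is a module map; it is positive, fixes `ℓ∞(G/H)`
because `1_H L_s x = x(s) 1_H` there, and lands in `ℓ∞(G/H)` by the `H`-invariance of `m`. -/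

open Classical in
lemma indic_apply (H : Subgroup G) (s : G) : indic H s = if s ∈ H then 1 else 0 := rfl

open Classical in
lemma mulIndic_apply (H : Subgroup G) (f : L1 G) (s : G) :
    mulIndic H f s = if s ∈ H then f s else 0 := rfl

lemma indic_mem_LinfQuot (H : Subgroup G) : indic H ∈ LinfQuot H := fun s h hh => by
  rw [indic_apply, indic_apply, H.mul_mem_cancel_right hh]

lemma indic_mul_apply (H : Subgroup G) (x : Linf G) (s : G) :
    (indic H * x) s = indic H s * x s := by
  rw [lp.infty_coeFn_mul, Pi.mul_apply]

lemma _root_.Complex.norm_le_of_nonneg_add_of_nonneg_sub {z : ℂ} {M : ℝ} (h₁ : 0 ≤ (M : ℂ) + z)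
    (h₂ : 0 ≤ (M : ℂ) - z) : ‖z‖ ≤ M := by
  rw [Complex.nonneg_iff] at h₁ h₂
  simp only [Complex.add_re, Complex.sub_re, Complex.add_im, Complex.sub_im, Complex.ofReal_re,
    Complex.ofReal_im, zero_add, zero_sub] at h₁ h₂
  rw [← Complex.re_add_im z, ← h₁.2, Complex.ofReal_zero, zero_mul, add_zero, Complex.norm_real,
    Real.norm_eq_abs, abs_le]
  constructor <;> linarith

section PositiveFunctional

variable {φ : Linf G →ₗ[ℂ] ℂ}

lemma nonneg_norm_smul_one'_add_of_isSelfAdjoint {r : Linf G} (hr : IsSelfAdjoint r) (s : G) :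
    0 ≤ ((‖r‖ : ℂ) • one' + r : Linf G) s := by
  have hreal : ((r s).re : ℂ) = r s := Complex.conj_eq_iff_re.mp (congrFun (congrArg (⇑) hr) s)
  have hbound : |(r s).re| ≤ ‖r‖ := (Complex.abs_re_le_norm _).trans (norm_apply_le r s)
  have hval : ((‖r‖ : ℂ) • one' + r : Linf G) s = ((‖r‖ + (r s).re : ℝ) : ℂ) := by
    rw [lp.coeFn_add, lp.coeFn_smul, Pi.add_apply, Pi.smul_apply, ← hreal]
    simp [one']
  rw [hval, Complex.zero_le_real]
  linarith [neg_abs_le (r s).re]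

-- Positivity on `‖r‖ ± r ≥ 0` squeezes `φ r` into the real interval `[-‖r‖, ‖r‖]`.
lemma norm_apply_le_of_isSelfAdjoint (h1 : φ one' = 1)
    (hpos : ∀ x : Linf G, (∀ s, 0 ≤ x s) → 0 ≤ φ x) {r : Linf G} (hr : IsSelfAdjoint r) :
    ‖φ r‖ ≤ ‖r‖ := by
  have h₁ := hpos _ (nonneg_norm_smul_one'_add_of_isSelfAdjoint hr)
  have h₂ := hpos _ (nonneg_norm_smul_one'_add_of_isSelfAdjoint hr.neg)
  rw [norm_neg] at h₂
  simp only [map_add, map_sub, map_smul, h1, smul_eq_mul, mul_one, ← sub_eq_add_neg] at h₁ h₂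
  exact Complex.norm_le_of_nonneg_add_of_nonneg_sub h₁ h₂

lemma norm_apply_le_two_mul (h1 : φ one' = 1)
    (hpos : ∀ x : Linf G, (∀ s, 0 ≤ x s) → 0 ≤ φ x) (x : Linf G) : ‖φ x‖ ≤ 2 * ‖x‖ :=
  calc ‖φ x‖ = ‖φ (realPart x) + Complex.I • φ (imaginaryPart x)‖ := by
        rw [← map_smul, ← map_add, realPart_add_I_smul_imaginaryPart]
    _ ≤ ‖φ (realPart x)‖ + ‖φ (imaginaryPart x)‖ := by
        simpa only [norm_smul, Complex.norm_I, one_mul] using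
          norm_add_le (φ (realPart x)) (Complex.I • φ (imaginaryPart x))
    _ ≤ ‖x‖ + ‖x‖ := add_le_add
        ((norm_apply_le_of_isSelfAdjoint h1 hpos (realPart x).2).trans (realPart.norm_le x))
        ((norm_apply_le_of_isSelfAdjoint h1 hpos (imaginaryPart x).2).trans
          (imaginaryPart.norm_le x))
    _ = 2 * ‖x‖ := (two_mul _).symm

end PositiveFunctional

def dualOfPositive (φ : Linf G →ₗ[ℂ] ℂ) (h1 : φ one' = 1)
    (hpos : ∀ x : Linf G, (∀ s, 0 ≤ x s) → 0 ≤ φ x) : DualLinf G :=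
  φ.mkContinuous 2 (norm_apply_le_two_mul h1 hpos)

lemma isState_dualOfPositive (φ : Linf G →ₗ[ℂ] ℂ) (h1 : φ one' = 1)
    (hpos : ∀ x : Linf G, (∀ s, 0 ≤ x s) → 0 ≤ φ x) : IsState (dualOfPositive φ h1 hpos) :=
  ⟨h1, hpos⟩

section Translation

lemma Ltrans_Ltrans (s t : G) (x : Linf G) : Ltrans t (Ltrans s x) = Ltrans (s * t) x :=
  lp.ext <| funext fun u => by simp [mul_assoc]

def LtransCLM (s : G) : Linf G →L[ℂ] Linf G :=
  LinearMap.mkContinuous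
    { toFun := Ltrans s
      map_add' := fun x y => lp.ext <| funext fun t => by simp
      map_smul' := fun c x => lp.ext <| funext fun t => by simp } 1
    (fun x => by simpa using norm_Ltrans_le s x)

@[simp] lemma LtransCLM_apply (s : G) (x : Linf G) : LtransCLM s x = Ltrans s x := rfl

open Classical in
lemma rAct_single (x : Linf G) (s : G) : rAct x (lp.single 1 s 1) = Ltrans s x :=
  lp.ext <| funext fun t => by
    rw [rAct_apply, tsum_eq_single s fun u hu => by simp [lp.single_apply, hu]]
    simp [lp.single_apply]

lemma hasSum_rAct (x : Linf G) (f : L1 G) : HasSum (fun s => f s • Ltrans s x) (rAct x f) := by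
  have hsum : Summable fun s => f s • Ltrans s x :=
    .of_norm_bounded ((summable_norm f).mul_right ‖x‖) fun s => by
      rw [norm_smul]; gcongr; exact norm_Ltrans_le s x
  convert hsum.hasSum
  refine lp.ext <| funext fun t => ?_
  simpa [lp.evalCLM] using ((lp.evalCLM ℂ (fun _ : G => ℂ) ∞ t).hasSum hsum.hasSum).tsum_eq

lemma map_rAct (μ : DualLinf G) (x : Linf G) (f : L1 G) :
    μ (rAct x f) = ∑' s, f s * μ (Ltrans s x) := by
  simpa using ((hasSum_rAct x f).mapL μ).tsum_eq.symm

lemma starAct_rAct (μ : DualLinf G) (x : Linf G) (f : L1 G) :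
    starAct μ (rAct x f) = rAct (starAct μ x) f :=
  lp.ext <| funext fun t => by
    simpa [Ltrans_Ltrans] using map_rAct (μ.comp (LtransCLM t)) x f

def starActₗ (μ : DualLinf G) : Linf G →ₗ[ℂ] Linf G where
  toFun := starAct μ
  map_add' x y := lp.ext <| funext fun t => by simp [← LtransCLM_apply]
  map_smul' c x := lp.ext <| funext fun t => by simp [← LtransCLM_apply]

end Translation

section Invariance

variable {H : Subgroup G}

lemma starAct_mem_LinfQuot {μ : DualLinf G} (hμ : HInvariant H μ) (x : Linf G) :
    starAct μ x ∈ LinfQuot H := fun s h hh => by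
  rw [starAct_apply, starAct_apply, ← Ltrans_Ltrans, hμ h hh]

open Classical in
lemma tsum_mulIndic_single_mul {h : G} (hh : h ∈ H) (g : G → ℂ) :
    ∑' s, mulIndic H (lp.single 1 h 1) s * g s = g h := by
  rw [tsum_eq_single h fun u hu => by simp [mulIndic_apply, lp.single_apply, hu]]
  simp [mulIndic_apply, lp.single_apply, hh]

lemma hInvariant_iff_forall_tsum_mulIndic (m : DualLinf G) :
    HInvariant H m ↔ ∀ (f : L1 G) (x : Linf G),
      ∑' s, mulIndic H f s * m (Ltrans s x) = (∑' s, mulIndic H f s) * m x := by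
  classical
  refine ⟨fun hm f x => ?_, fun hm h hh x => ?_⟩
  · rw [← tsum_mul_right]
    refine tsum_congr fun s => ?_
    by_cases hs : s ∈ H
    · rw [hm s hs]
    · simp [mulIndic_apply, hs]
  · have hsum := hm (lp.single 1 h 1) x
    have hmass := tsum_mulIndic_single_mul hh fun _ => (1 : ℂ)
    simp only [mul_one] at hmass
    rwa [tsum_mulIndic_single_mul hh, hmass, one_mul] at hsum

end Invariance

section AmenToState

variable {H : Subgroup G} {E : Linf G →ₗ[ℂ] Linf G}

lemma IsRelAmenMap.map_Ltrans (hE : IsRelAmenMap H E) (s : G) (x : Linf G) :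
    E (Ltrans s x) = Ltrans s (E x) := by
  rw [← rAct_single, hE.2.2.2, rAct_single]

def IsRelAmenMap.stateAtOne (hE : IsRelAmenMap H E) : DualLinf G :=
  dualOfPositive ((lp.evalₗ (fun _ : G => ℂ) ∞ 1).comp E) (by rw [LinearMap.comp_apply, hE.1]; rfl)
    (fun x hx => hE.2.1 x hx 1)

lemma IsRelAmenMap.stateAtOne_apply (hE : IsRelAmenMap H E) (x : Linf G) :
    hE.stateAtOne x = E x 1 := rfl

lemma IsRelAmenMap.starAct_stateAtOne (hE : IsRelAmenMap H E) (x : Linf G) :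
    starAct hE.stateAtOne x = E x :=
  lp.ext <| funext fun s => by simp [hE.stateAtOne_apply, hE.map_Ltrans]

lemma IsRelAmenMap.hInvariant_stateAtOne (hE : IsRelAmenMap H E) : HInvariant H hE.stateAtOne :=
  fun h hh x => by
    rw [← starAct_apply, hE.starAct_stateAtOne, hE.stateAtOne_apply, ← hE.2.2.1 x 1 h hh, one_mul]

lemma Amen.exists_hInvariant_state (hH : Amen H) :
    ∃ m : DualLinf G, IsState m ∧ m (indic H) ≠ 0 ∧ HInvariant H m := by
  obtain ⟨E, hE, hfix⟩ := hH
  refine ⟨hE.stateAtOne, isState_dualOfPositive _ _ _, ?_, hE.hInvariant_stateAtOne⟩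
  simp [hE.stateAtOne_apply, hfix _ (indic_mem_LinfQuot H), indic_apply]

end AmenToState

section StateToAmen

variable {H : Subgroup G} {m : DualLinf G}

def condMean (H : Subgroup G) (m : DualLinf G) : DualLinf G :=
  (m (indic H))⁻¹ • m.comp (ContinuousLinearMap.mul ℂ (Linf G) (indic H))

lemma condMean_apply (x : Linf G) : condMean H m x = m (indic H * x) / m (indic H) := by
  simp [condMean, div_eq_inv_mul]

lemma indic_mul_Ltrans_of_mem {h : G} (hh : h ∈ H) (x : Linf G) :
    indic H * Ltrans h x = Ltrans h (indic H * x) :=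
  lp.ext <| funext fun u => by
    rw [indic_mul_apply, Ltrans_apply, Ltrans_apply, indic_mul_apply, indic_apply, indic_apply,
      H.mul_mem_cancel_left hh]

lemma indic_mul_Ltrans_of_mem_LinfQuot {x : Linf G} (hx : x ∈ LinfQuot H) (s : G) :
    indic H * Ltrans s x = x s • indic H :=
  lp.ext <| funext fun u => by
    by_cases hu : u ∈ H <;> simp [indic_mul_apply, indic_apply, hu, hx s u]

lemma HInvariant.condMean (hm : HInvariant H m) : HInvariant H (condMean H m) :=
  fun h hh x => by rw [condMean_apply, condMean_apply, indic_mul_Ltrans_of_mem hh, hm h hh]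

lemma condMean_Ltrans_of_mem_LinfQuot (hc : m (indic H) ≠ 0) {x : Linf G}
    (hx : x ∈ LinfQuot H) (s : G) : condMean H m (Ltrans s x) = x s := by
  rw [condMean_apply, indic_mul_Ltrans_of_mem_LinfQuot hx, map_smul, smul_eq_mul,
    mul_div_assoc, div_self hc, mul_one]

lemma condMean_nonneg (hm : IsState m) {x : Linf G} (hx : ∀ s, 0 ≤ x s) :
    0 ≤ condMean H m x := by
  have hindic : ∀ s, 0 ≤ indic H s := fun s => by rw [indic_apply]; split_ifs <;> simp
  rw [condMean_apply]
  refine div_nonneg (hm.2 _ fun s => ?_) (hm.2 _ hindic)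
  rw [indic_mul_apply]
  exact mul_nonneg (hindic s) (hx s)

lemma amen_of_hInvariant_state (hm : IsState m) (hc : m (indic H) ≠ 0)
    (hinv : HInvariant H m) : Amen H := by
  have hfix : ∀ x ∈ LinfQuot H, starActₗ (condMean H m) x = x := fun x hx =>
    lp.ext <| funext fun s => condMean_Ltrans_of_mem_LinfQuot hc hx s
  refine ⟨starActₗ (condMean H m), ⟨hfix _ (one'_mem_LinfQuot H), ?_, ?_, ?_⟩, hfix⟩
  · exact fun x hx s => condMean_nonneg hm fun t => hx (s * t)
  · exact starAct_mem_LinfQuot hinv.condMean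
  · exact starAct_rAct _

end StateToAmen

/-- `ℓ∞(G/H)` is amenable iff there is a state `m` with `m(1_H) ≠ 0`
which is `ℓ¹(G)·1_H`-invariant. -/
theorem statement9 (H : Subgroup G) :
    Amen H ↔ ∃ m : DualLinf G, IsState m ∧ m (indic H) ≠ 0 ∧
      ∀ (f : L1 G) (x : Linf G),
        ∑' s, mulIndic H f s * m (Ltrans s x) = (∑' s, mulIndic H f s) * m x := by
  simp only [← hInvariant_iff_forall_tsum_mulIndic]
  exact ⟨Amen.exists_hInvariant_state,
    fun ⟨_, hm, hc, hinv⟩ => amen_of_hInvariant_state hm hc hinv⟩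

end QG
end
end
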